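/- arXiv:2111.05818 — 4 statements merged into one kernel-verified Lean document; each statement's English description precedes it below -/
import Mathlib

section
/- For a closed convex set C ⊆ ℝ^d with B(r) ⊆ C ⊆ B(R), 0 < r ≤ R, and any point u ∉ C, the point u/γ_C(u) is a Gauge projection of u onto C, i.e., u/γ_C(u) ∈ argmin_{x ∈ C} γ_C(u − x). -/
/-!
Since `u ↦ γ_C(u)` is positively homogeneous, `u / γ_C(u)` lies on the boundary level set
`γ_C = 1`, and `γ_C(u - u / γ_C(u)) = γ_C(u) - 1`. Subadditivity of the gauge of a convex absorbent
set gives `γ_C(u) ≤ γ_C(u - x) + γ_C(x) ≤ γ_C(u - x) + 1` for every `x ∈ C`, so no point of `C`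
does better.
-/

open Filter Topology

section Algebraic

variable {E : Type*} [AddCommGroup E] [Module ℝ E] {C : Set E}

theorem gauge_inv_smul_self {u : E} (hu : gauge C u ≠ 0) : gauge C ((gauge C u)⁻¹ • u) = 1 := by
  rw [gauge_smul_of_nonneg (inv_nonneg.2 (gauge_nonneg u)), smul_eq_mul, inv_mul_cancel₀ hu]

theorem gauge_sub_inv_smul_self {u : E} (hu : 1 ≤ gauge C u) :
    gauge C (u - (gauge C u)⁻¹ • u) = gauge C u - 1 := by
  have hpos : 0 < gauge C u := one_pos.trans_le hu
  have hcoef : 0 ≤ 1 - (gauge C u)⁻¹ := sub_nonneg.2 (inv_le_one_of_one_le₀ hu)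
  rw [show u - (gauge C u)⁻¹ • u = (1 - (gauge C u)⁻¹) • u by rw [sub_smul, one_smul],
    gauge_smul_of_nonneg hcoef, smul_eq_mul, sub_mul, one_mul, inv_mul_cancel₀ hpos.ne']

theorem gauge_sub_one_le_gauge_sub (hconv : Convex ℝ C) (habs : Absorbent ℝ C) (u : E) {x : E}
    (hx : gauge C x ≤ 1) : gauge C u - 1 ≤ gauge C (u - x) := by
  have := gauge_add_le hconv habs (u - x) x
  rw [sub_add_cancel] at this
  linarith

end Algebraic

theorem IsClosed.gauge_le_one_iff {E : Type*} [AddCommGroup E] [Module ℝ E] [TopologicalSpace E]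
    [IsTopologicalAddGroup E] [ContinuousSMul ℝ E] {C : Set E} (hclosed : IsClosed C)
    (hconv : Convex ℝ C) (hC0 : C ∈ 𝓝 0) {x : E} : gauge C x ≤ 1 ↔ x ∈ C := by
  rw [gauge_le_one_iff_mem_closure hconv hC0, hclosed.closure_eq]

theorem gauge_projection_mem_argmin_general {d : ℕ} (C : Set (EuclideanSpace ℝ (Fin d))) (r : ℝ)
    (hr : 0 < r) (hclosed : IsClosed C) (hconv : Convex ℝ C)
    (hlow : Metric.closedBall 0 r ⊆ C)
    (u : EuclideanSpace ℝ (Fin d)) (hu : u ∉ C) :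
    (gauge C u)⁻¹ • u ∈ C ∧
      ∀ x ∈ C, gauge C (u - (gauge C u)⁻¹ • u) ≤ gauge C (u - x) := by
  have hC0 : C ∈ 𝓝 0 := mem_of_superset (Metric.closedBall_mem_nhds 0 hr) hlow
  have hmem (y) : gauge C y ≤ 1 ↔ y ∈ C := hclosed.gauge_le_one_iff hconv hC0
  have hgt : 1 < gauge C u := not_le.1 fun h => hu ((hmem u).1 h)
  refine ⟨(hmem _).1 (gauge_inv_smul_self (one_pos.trans hgt).ne').le, fun x hx => ?_⟩
  rw [gauge_sub_inv_smul_self hgt.le]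
  exact gauge_sub_one_le_gauge_sub hconv (absorbent_nhds_zero hC0) u ((hmem x).2 hx)

/-- For a closed convex set `C` with `B(r) ⊆ C ⊆ B(R)`, `0 < r ≤ R`, and any
`u ∉ C`, the point `u / γ_C(u)` is a Gauge projection of `u` onto `C`: it
belongs to `C` and minimizes `x ↦ γ_C(u − x)` over `x ∈ C`. -/
theorem gauge_projection_mem_argmin {d : ℕ} (C : Set (EuclideanSpace ℝ (Fin d))) (r R : ℝ)
    (hr : 0 < r) (hrR : r ≤ R) (hclosed : IsClosed C) (hconv : Convex ℝ C)
    (hlow : Metric.closedBall 0 r ⊆ C) (hhigh : C ⊆ Metric.closedBall 0 R)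
    (u : EuclideanSpace ℝ (Fin d)) (hu : u ∉ C) :
    (gauge C u)⁻¹ • u ∈ C ∧
      ∀ x ∈ C, gauge C (u - (gauge C u)⁻¹ • u) ≤ gauge C (u - x) :=
  gauge_projection_mem_argmin_general C r hr hclosed hconv hlow u hu
end

section
/- For a closed convex set C ⊆ ℝ^d with B(r) ⊆ C ⊆ B(R), 0 < r ≤ R, any maximizer s* ∈ argmax_{s ∈ C°} ⟨s, w⟩ for w ∉ C lies in the normal cone of C at the point w/γ_C(w). -/
open RealInnerProductSpace

/-- The polar set of `C`: `C° = {s : ⟪s, u⟫ ≤ 1 for all u ∈ C}`. -/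
def polarSet {d : ℕ} (C : Set (EuclideanSpace ℝ (Fin d))) :
    Set (EuclideanSpace ℝ (Fin d)) :=
  {s | ∀ u ∈ C, ⟪s, u⟫ ≤ 1}

/-- The normal cone of `C` at `u`: `N_C(u) = {s : ⟪s, x − u⟫ ≤ 0 for all x ∈ C}`. -/
def normalCone {d : ℕ} (C : Set (EuclideanSpace ℝ (Fin d)))
    (u : EuclideanSpace ℝ (Fin d)) : Set (EuclideanSpace ℝ (Fin d)) :=
  {s | ∀ x ∈ C, ⟪s, x - u⟫ ≤ 0}

/-!
Write `γ = γ_C(w)`. Since `C` is closed and `0` is interior, `w ∉ C` gives `γ > 1`. For every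
`0 < t < γ` the point `w / t` lies outside `C`, so separating it from `C` by a hyperplane and
normalising yields some `s ∈ C°` with `⟪s, w⟫ > t`; hence the maximal value `⟪s*, w⟫` is at
least `γ`. Then for `x ∈ C`, `⟪s*, x⟫ ≤ 1 ≤ ⟪s*, w / γ⟫`.
-/

section Gauge

variable {E : Type*} [AddCommGroup E] [Module ℝ E] {s : Set E} {x : E}

theorem one_lt_gauge_of_notMem [TopologicalSpace E] [IsTopologicalAddGroup E]
    [ContinuousSMul ℝ E] (hc : Convex ℝ s) (hcl : IsClosed s) (hs₀ : s ∈ nhds 0)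
    (hx : x ∉ s) : 1 < gauge s x := by
  rw [← not_le, gauge_le_one_iff_mem_closure hc hs₀, hcl.closure_eq]
  exact hx

theorem inv_smul_notMem_of_lt_gauge {t : ℝ} (ht : 0 < t) (hlt : t < gauge s x) :
    t⁻¹ • x ∉ s := fun hmem =>
  hlt.not_ge <| gauge_le_of_mem ht.le <| (Set.mem_smul_set_iff_inv_smul_mem₀ ht.ne' _ _).2 hmem

end Gauge

section Polar

variable {d : ℕ} {C : Set (EuclideanSpace ℝ (Fin d))}

theorem zero_mem_polarSet (C : Set (EuclideanSpace ℝ (Fin d))) : 0 ∈ polarSet C :=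
  fun u _ => by simp

theorem exists_mem_polarSet_one_lt_inner (hc : Convex ℝ C) (hcl : IsClosed C) (h0 : 0 ∈ C)
    {y : EuclideanSpace ℝ (Fin d)} (hy : y ∉ C) : ∃ s ∈ polarSet C, 1 < ⟪s, y⟫ := by
  obtain ⟨f, c, hfC, hfy⟩ := geometric_hahn_banach_closed_point hc hcl hy
  have hc0 : 0 < c := by simpa using hfC 0 h0
  set v := (InnerProductSpace.toDual ℝ (EuclideanSpace ℝ (Fin d))).symm f
  have hinner : ∀ u, ⟪c⁻¹ • v, u⟫ = f u / c := fun u => by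
    rw [real_inner_smul_left, InnerProductSpace.toDual_symm_apply, inv_mul_eq_div]
  refine ⟨c⁻¹ • v, fun u hu => ?_, ?_⟩
  · rw [hinner, div_le_one hc0]
    exact (hfC u hu).le
  · rwa [hinner, one_lt_div hc0]

theorem gauge_le_inner_of_forall_inner_le (hc : Convex ℝ C) (hcl : IsClosed C) (h0 : 0 ∈ C)
    {w s₀ : EuclideanSpace ℝ (Fin d)} (hmax : ∀ s ∈ polarSet C, ⟪s, w⟫ ≤ ⟪s₀, w⟫) :
    gauge C w ≤ ⟪s₀, w⟫ := by
  by_contra! hlt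
  have hnonneg : 0 ≤ ⟪s₀, w⟫ := by simpa using hmax 0 (zero_mem_polarSet C)
  obtain ⟨t, hst, htγ⟩ := exists_between hlt
  have ht : 0 < t := hnonneg.trans_lt hst
  obtain ⟨s, hs, hsw⟩ :=
    exists_mem_polarSet_one_lt_inner hc hcl h0 (inv_smul_notMem_of_lt_gauge ht htγ)
  rw [real_inner_smul_right, inv_mul_eq_div, one_lt_div ht] at hsw
  exact (hsw.trans_le (hmax s hs)).not_gt hst

theorem mem_normalCone_inv_gauge_smul {w s₀ : EuclideanSpace ℝ (Fin d)}
    (hs₀ : s₀ ∈ polarSet C) (hγ : 0 < gauge C w) (hle : gauge C w ≤ ⟪s₀, w⟫) :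
    s₀ ∈ normalCone C ((gauge C w)⁻¹ • w) := by
  intro x hx
  rw [inner_sub_right, real_inner_smul_right, sub_nonpos, inv_mul_eq_div]
  calc ⟪s₀, x⟫ ≤ 1 := hs₀ x hx
    _ ≤ ⟪s₀, w⟫ / gauge C w := (one_le_div hγ).2 hle

end Polar

theorem argmax_polar_mem_normalCone_general {d : ℕ} (C : Set (EuclideanSpace ℝ (Fin d))) (r : ℝ)
    (hr : 0 < r) (hclosed : IsClosed C) (hconv : Convex ℝ C)
    (hlow : Metric.closedBall 0 r ⊆ C)
    (w : EuclideanSpace ℝ (Fin d)) (hw : w ∉ C)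
    (sStar : EuclideanSpace ℝ (Fin d)) (hs : sStar ∈ polarSet C)
    (hmax : ∀ s ∈ polarSet C, ⟪s, w⟫ ≤ ⟪sStar, w⟫) :
    sStar ∈ normalCone C ((gauge C w)⁻¹ • w) := by
  have hC : C ∈ nhds 0 := Filter.mem_of_superset (Metric.closedBall_mem_nhds 0 hr) hlow
  have hγ : 1 < gauge C w := one_lt_gauge_of_notMem hconv hclosed hC hw
  exact mem_normalCone_inv_gauge_smul hs (one_pos.trans hγ)
    (gauge_le_inner_of_forall_inner_le hconv hclosed (mem_of_mem_nhds hC) hmax)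

/-- For a closed convex set `C` with `B(r) ⊆ C ⊆ B(R)`, `0 < r ≤ R`, and `w ∉ C`,
any maximizer `s* ∈ argmax_{s ∈ C°} ⟪s, w⟫` lies in the normal cone of `C` at
the point `w / γ_C(w)`. -/
theorem argmax_polar_mem_normalCone {d : ℕ} (C : Set (EuclideanSpace ℝ (Fin d))) (r R : ℝ)
    (hr : 0 < r) (hrR : r ≤ R) (hclosed : IsClosed C) (hconv : Convex ℝ C)
    (hlow : Metric.closedBall 0 r ⊆ C) (hhigh : C ⊆ Metric.closedBall 0 R)
    (w : EuclideanSpace ℝ (Fin d)) (hw : w ∉ C)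
    (sStar : EuclideanSpace ℝ (Fin d)) (hs : sStar ∈ polarSet C)
    (hmax : ∀ s ∈ polarSet C, ⟪s, w⟫ ≤ ⟪sStar, w⟫) :
    sStar ∈ normalCone C ((gauge C w)⁻¹ • w) :=
  argmax_polar_mem_normalCone_general C r hr hclosed hconv hlow w hw sStar hs hmax
end

section
/- For n > 2, the convex hull of the special orthogonal group SO(n) ⊆ ℝ^{n×n} (rotation matrices) contains the Frobenius-norm ball of radius 1/2 centered at the origin and is contained in the Frobenius-norm ball of radius √n. -/
/-- The special orthogonal (rotation) matrices:
`SO(n) = {x ∈ ℝ^{n×n} : xᵀx = I, det x = 1}`. -/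
def SOset (n : ℕ) : Set (Matrix (Fin n) (Fin n) ℝ) :=
  {x | x.transpose * x = 1 ∧ x.det = 1}

/-- The Frobenius norm of a real square matrix. -/
noncomputable def frobNorm {n : ℕ} (x : Matrix (Fin n) (Fin n) ℝ) : ℝ :=
  Real.sqrt (∑ i, ∑ j, (x i j) ^ 2)

/-!
The upper bound holds because every rotation has Frobenius norm `√n` and Frobenius balls are
convex.

For the lower bound, an invertible `y` factors as `U * diagonal d * Vᵀ` with `U, V ∈ SO(n)` and
`∑ dᵢ² = ‖y‖_F²` (singular value decomposition, with a possible sign absorbed into `d`). Hence it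
suffices that `d` lies in the convex hull of the even sign vectors, whose diagonal matrices are
rotations. That hull contains every point of the cube `[-1, 1]ⁿ` with two zero coordinates, and
cutting `d` into three pieces with disjoint supports (possible as `n ≥ 3`) shows that it contains
the Euclidean ball of radius `1 / √3`. Finally, a matrix `x` with `‖x‖_F ≤ 1 / 2` is the midpoint
of `x + ε • 1` and `x - ε • 1`, which are invertible for all small `ε ≠ 0`.
-/

open Matrix Filter Topology

lemma Convex.sum_smul_mem_of_sum_le_one {𝕜 E κ : Type*} [Field 𝕜] [LinearOrder 𝕜]
    [IsStrictOrderedRing 𝕜] [AddCommGroup E] [Module 𝕜 E] {s : Set E} (hs : Convex 𝕜 s)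
    (h0 : 0 ∈ s) {t : Finset κ} {w : κ → 𝕜} {z : κ → E}
    (hw₀ : ∀ m ∈ t, 0 ≤ w m) (hw₁ : ∑ m ∈ t, w m ≤ 1) (hz : ∀ m ∈ t, z m ∈ s) :
    ∑ m ∈ t, w m • z m ∈ s := by
  rcases (Finset.sum_nonneg hw₀).eq_or_lt with hW | hW
  · rw [Finset.sum_eq_zero fun m hm => by
      rw [(Finset.sum_eq_zero_iff_of_nonneg hw₀).mp hW.symm m hm, zero_smul]]
    exact h0
  · have hc : t.centerMass w z ∈ s := hs.centerMass_mem hw₀ hW hz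
    rw [← smul_inv_smul₀ hW.ne' (∑ m ∈ t, w m • z m)]
    exact hs.smul_mem_of_zero_mem h0 hc ⟨hW.le, hw₁⟩

section EvenSigns

def evenSigns (ι : Type*) [Fintype ι] : Set (ι → ℝ) :=
  {v | (∀ i, v i = 1 ∨ v i = -1) ∧ ∏ i, v i = 1}

variable {ι : Type*} [Fintype ι] [DecidableEq ι]

lemma mul_mulSingle_prod_mem_evenSigns {τ : ι → ℝ} (hτ : ∀ k, τ k = 1 ∨ τ k = -1) (j : ι) :
    τ * Pi.mulSingle j (∏ k, τ k) ∈ evenSigns ι := by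
  have hp : ∏ k, τ k = 1 ∨ ∏ k, τ k = -1 :=
    Finset.prod_induction _ (fun x => x = 1 ∨ x = -1)
      (by rintro _ _ (rfl | rfl) (rfl | rfl) <;> norm_num) (by norm_num) fun k _ => hτ k
  refine ⟨fun k => ?_, ?_⟩
  · rcases eq_or_ne k j with rfl | hkj
    · rcases hτ k with h | h <;> rcases hp with hp | hp <;> simp [h, hp]
    · simpa [hkj] using hτ k
  · simp only [Pi.mul_apply]
    rw [Finset.prod_mul_distrib, Fintype.prod_pi_mulSingle']
    rcases hp with hp | hp <;> simp [hp]

lemma mul_mulSingle_neg_one_mul_mem_evenSigns {s : ι → ℝ} (hs : s ∈ evenSigns ι) {i j : ι}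
    (hij : i ≠ j) : s * (Pi.mulSingle i (-1) * Pi.mulSingle j (-1)) ∈ evenSigns ι := by
  refine ⟨fun k => ?_, ?_⟩
  · rcases eq_or_ne k i with rfl | hki
    · rcases hs.1 k with h | h <;> simp [h, hij]
    · rcases eq_or_ne k j with rfl | hkj
      · rcases hs.1 k with h | h <;> simp [h, hki]
      · simpa [hki, hkj] using hs.1 k
  · simp only [Pi.mul_apply]
    rw [Finset.prod_mul_distrib, Finset.prod_mul_distrib, hs.2, Fintype.prod_pi_mulSingle',
      Fintype.prod_pi_mulSingle']
    norm_num

lemma mem_convexHull_evenSigns_of_two_zeros {v : ι → ℝ} (hv : ∀ k, |v k| ≤ 1) {i j : ι}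
    (hij : i ≠ j) (hi : v i = 0) (hj : v j = 0) : v ∈ convexHull ℝ (evenSigns ι) := by
  set t : ι → Set ℝ := fun k => if k = i ∨ k = j then {0} else {-1, 1}
  have hvt : v ∈ convexHull ℝ (Set.univ.pi t) := by
    refine mem_convexHull_pi fun k _ => ?_
    by_cases hk : k = i ∨ k = j
    · rcases hk with rfl | rfl <;> simp [t, hi, hj]
    · simpa [t, hk, convexHull_pair, segment_eq_Icc] using abs_le.mp (hv k)
  refine convexHull_min (fun σ hσ => ?_) (convex_convexHull ℝ _) hvt
  -- `σ` is the midpoint of two even sign vectors that differ exactly at `i` and `j`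
  set τ := σ + Pi.single i 1 + Pi.single j 1
  have hτ : ∀ k, τ k = 1 ∨ τ k = -1 := by
    intro k
    have hk := hσ k (Set.mem_univ k)
    by_cases h : k = i ∨ k = j
    · rcases h with rfl | rfl <;> simp_all [t, τ]
    · simp_all [t, τ, or_comm]
  set s := τ * Pi.mulSingle j (∏ k, τ k)
  have hs : s ∈ evenSigns ι := mul_mulSingle_prod_mem_evenSigns hτ j
  have hmid : σ = (1 / 2 : ℝ) • s +
      (1 / 2 : ℝ) • (s * (Pi.mulSingle i (-1) * Pi.mulSingle j (-1))) := by
    ext k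
    have hk := hσ k (Set.mem_univ k)
    by_cases h : k = i ∨ k = j
    · rcases h with rfl | rfl <;> simp_all [t, τ, s]
    · simp_all [t, τ, s]
      ring
  rw [hmid]
  exact convex_convexHull ℝ _ (subset_convexHull ℝ _ hs)
    (subset_convexHull ℝ _ (mul_mulSingle_neg_one_mul_mem_evenSigns hs hij))
    (by norm_num) (by norm_num) (by norm_num)

lemma sum_mem_convexHull_evenSigns [Nontrivial ι] {κ : Type*} {t : Finset κ} {w : κ → ι → ℝ}
    {a : κ → ℝ} (hzero : ∀ m ∈ t, ∃ i j, i ≠ j ∧ w m i = 0 ∧ w m j = 0)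
    (hw : ∀ m ∈ t, ∀ k, |w m k| ≤ a m) (ha : ∑ m ∈ t, a m ≤ 1) : ∑ m ∈ t, w m ∈ convexHull ℝ (evenSigns ι) := by
  have ha₀ : ∀ m ∈ t, 0 ≤ a m := fun m hm =>
    (abs_nonneg _).trans (hw m hm (hzero m hm).choose)
  have hw' : ∀ m ∈ t, a m • (a m)⁻¹ • w m = w m := by
    intro m hm
    rcases eq_or_ne (a m) 0 with h | h
    · ext k
      simpa [h, eq_comm] using hw m hm k
    · exact smul_inv_smul₀ h _
  rw [← Finset.sum_congr rfl hw']
  refine (convex_convexHull ℝ _).sum_smul_mem_of_sum_le_one ?_ ha₀ ha fun m hm => ?_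
  · obtain ⟨i, j, hij⟩ := exists_pair_ne ι
    exact mem_convexHull_evenSigns_of_two_zeros (by simp) hij rfl rfl
  · obtain ⟨i, j, hij, hi, hj⟩ := hzero m hm
    refine mem_convexHull_evenSigns_of_two_zeros (fun k => ?_) hij (by simp [hi]) (by simp [hj])
    rw [Pi.smul_apply, smul_eq_mul, abs_mul, abs_inv, abs_of_nonneg (ha₀ m hm)]
    exact inv_mul_le_one_of_le₀ (hw m hm k) (ha₀ m hm)

lemma mem_convexHull_evenSigns_of_sum_sq_le (hι : 2 < Fintype.card ι) {d : ι → ℝ}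
    (hd : ∑ k, d k ^ 2 ≤ 1 / 3) : d ∈ convexHull ℝ (evenSigns ι) := by
  obtain ⟨a, b, c, hab, hac, hbc⟩ := Fintype.two_lt_card_iff.mp hι
  have : Nontrivial ι := ⟨⟨a, b, hab⟩⟩
  -- split `d` into three pieces, each vanishing at two of `a`, `b`, `c`
  let part : ι → Fin 3 := fun k => if k = b then 1 else if k = c then 2 else 0
  let w : Fin 3 → ι → ℝ := fun m k => if part k = m then d k else 0
  let r : Fin 3 → ℝ := fun m => √(∑ k, w m k ^ 2)
  have hd_eq : d = ∑ m, w m := by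
    ext k
    simp [w, Finset.sum_apply]
  have hsq : ∑ m, r m ^ 2 = ∑ k, d k ^ 2 := by
    simp only [r, Real.sq_sqrt (Finset.sum_nonneg fun _ _ => sq_nonneg _)]
    rw [Finset.sum_comm]
    simp [w, ite_pow]
  have hr : ∑ m, r m ≤ 1 := by
    have := sq_sum_le_card_mul_sum_sq (s := Finset.univ) (f := r)
    simp only [Finset.card_univ, Fintype.card_fin, Nat.cast_ofNat, hsq] at this
    nlinarith [Finset.sum_nonneg fun m (_ : m ∈ Finset.univ) => Real.sqrt_nonneg (∑ k, w m k ^ 2)]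
  rw [hd_eq]
  refine sum_mem_convexHull_evenSigns (fun m _ => ?_)
    (fun m _ k => Real.abs_le_sqrt (Finset.single_le_sum (f := fun k => w m k ^ 2)
      (fun _ _ => sq_nonneg _) (Finset.mem_univ k))) hr
  fin_cases m
  · exact ⟨b, c, hbc, by simp [w, part], by simp [w, part, hbc.symm]⟩
  · exact ⟨a, c, hac, by simp [w, part, hab, hac], by simp [w, part, hbc.symm]⟩
  · exact ⟨a, b, hab, by simp [w, part, hab, hac], by simp [w, part]⟩

end EvenSigns

lemma star_eq_transpose {m : Type*} (x : Matrix m m ℝ) : star x = xᵀ := by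
  simp [star_eq_conjTranspose]

lemma sum_sq_eq_trace_transpose_mul {m : Type*} [Fintype m] (x : Matrix m m ℝ) :
    ∑ i, ∑ j, x i j ^ 2 = (xᵀ * x).trace := by
  simp only [trace, diag_apply, mul_apply, transpose_apply, sq]
  exact Finset.sum_comm

section Orthogonal

variable {m : Type*} [Fintype m] [DecidableEq m]

lemma sum_sq_mul_orthogonal (x : Matrix m m ℝ) {V : Matrix m m ℝ} (hV : V ∈ orthogonalGroup m ℝ) :
    ∑ i, ∑ j, (x * V) i j ^ 2 = ∑ i, ∑ j, x i j ^ 2 := by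
  have hVV : V * Vᵀ = 1 := by rw [← star_eq_transpose]; exact hV.2
  rw [sum_sq_eq_trace_transpose_mul, sum_sq_eq_trace_transpose_mul, transpose_mul,
    Matrix.mul_assoc, trace_mul_comm, Matrix.mul_assoc, Matrix.mul_assoc, hVV, Matrix.mul_one]

lemma exists_orthogonal_transpose_mul_self_eq_diagonal (y : Matrix m m ℝ) :
    ∃ V ∈ orthogonalGroup m ℝ, ∃ μ : m → ℝ, (y * V)ᵀ * (y * V) = diagonal μ := by
  have hM : (yᵀ * y).IsHermitian := by
    simpa [conjTranspose_eq_transpose_of_trivial] using isHermitian_conjTranspose_mul_self y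
  refine ⟨hM.eigenvectorUnitary, hM.eigenvectorUnitary.2, hM.eigenvalues, ?_⟩
  have := hM.conjStarAlgAut_star_eigenvectorUnitary
  simp only [Unitary.conjStarAlgAut_apply, RCLike.ofReal_real_eq_id, Function.id_comp] at this
  rw [← this, transpose_mul]
  simp only [Matrix.mul_assoc, Unitary.coe_star, star_eq_transpose]
  rfl

lemma exists_orthogonal_mul_diagonal_of_transpose_mul_self_eq_diagonal {Z : Matrix m m ℝ}
    (hZ : Z.det ≠ 0) {μ : m → ℝ} (hμ : Zᵀ * Z = diagonal μ) :
    ∃ U ∈ orthogonalGroup m ℝ, ∃ d : m → ℝ, Z = U * diagonal d ∧ ∀ i, d i ^ 2 = μ i := by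
  have hμ_pos : ∀ i, 0 < μ i := by
    intro i
    have h_nonneg : 0 ≤ μ i := by
      rw [← diagonal_apply_eq μ i, ← hμ, mul_apply]
      exact Finset.sum_nonneg fun k _ => mul_self_nonneg _
    have h_det : (diagonal μ).det ≠ 0 := by
      rw [← hμ, det_mul, det_transpose]
      exact mul_ne_zero hZ hZ
    rw [det_diagonal] at h_det
    exact h_nonneg.lt_of_ne (Finset.prod_ne_zero_iff.mp h_det i (Finset.mem_univ i)).symm
  set d : m → ℝ := fun i => √(μ i)
  have hd : ∀ i, d i * d i = μ i := fun i => Real.mul_self_sqrt (hμ_pos i).le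
  have hd_ne : ∀ i, d i ≠ 0 := fun i => (Real.sqrt_pos.mpr (hμ_pos i)).ne'
  refine ⟨Z * diagonal d⁻¹, ?_, d, ?_, fun i => (sq (d i)).trans (hd i)⟩
  · rw [mem_orthogonalGroup_iff', transpose_mul, diagonal_transpose, Matrix.mul_assoc,
      ← Matrix.mul_assoc Zᵀ, hμ, diagonal_mul_diagonal, diagonal_mul_diagonal, ← diagonal_one]
    congr 1
    ext i
    simp only [Pi.inv_apply, ← hd i]
    field_simp [hd_ne i]
  · rw [Matrix.mul_assoc, diagonal_mul_diagonal]
    convert (Matrix.mul_one Z).symm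
    rw [← diagonal_one]
    congr 1
    ext i
    exact inv_mul_cancel₀ (hd_ne i)

lemma exists_orthogonal_mul_diagonal_mul_transpose {y : Matrix m m ℝ} (hy : y.det ≠ 0) :
    ∃ U ∈ orthogonalGroup m ℝ, ∃ V ∈ orthogonalGroup m ℝ, ∃ d : m → ℝ,
      y = U * diagonal d * Vᵀ ∧ ∑ i, d i ^ 2 = ∑ i, ∑ j, y i j ^ 2 := by
  obtain ⟨V, hV, μ, hμ⟩ := exists_orthogonal_transpose_mul_self_eq_diagonal y
  have hV_det : V.det ≠ 0 := by
    intro h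
    simpa [h, star_eq_transpose] using congrArg det hV.1
  obtain ⟨U, hU, d, hyV, hd⟩ :=
    exists_orthogonal_mul_diagonal_of_transpose_mul_self_eq_diagonal
      (by rw [det_mul]; exact mul_ne_zero hy hV_det) hμ
  refine ⟨U, hU, V, hV, d, ?_, ?_⟩
  · rw [← hyV, Matrix.mul_assoc, ← star_eq_transpose, hV.2, Matrix.mul_one]
  · rw [← sum_sq_mul_orthogonal y hV, sum_sq_eq_trace_transpose_mul, hμ, trace_diagonal]
    exact Finset.sum_congr rfl fun i _ => hd i

lemma det_mul_self_eq_one_of_mem_orthogonalGroup {U : Matrix m m ℝ}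
    (hU : U ∈ orthogonalGroup m ℝ) : U.det * U.det = 1 := by
  simpa [star_eq_transpose] using congrArg det hU.1

lemma diagonal_mem_orthogonalGroup {s : m → ℝ} (hs : s * s = 1) :
    diagonal s ∈ orthogonalGroup m ℝ := by
  rw [mem_orthogonalGroup_iff', diagonal_transpose, diagonal_mul_diagonal, ← diagonal_one]
  exact congrArg diagonal hs

lemma exists_mul_diagonal_mem_specialOrthogonalGroup [Nonempty m] {U : Matrix m m ℝ}
    (hU : U ∈ orthogonalGroup m ℝ) :
    ∃ s : m → ℝ, s * s = 1 ∧ U * diagonal s ∈ specialOrthogonalGroup m ℝ := by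
  have hdet := det_mul_self_eq_one_of_mem_orthogonalGroup hU
  set i₀ := Classical.arbitrary m
  have hs : Pi.mulSingle i₀ U.det * Pi.mulSingle i₀ U.det = (1 : m → ℝ) := by
    rw [← Pi.mulSingle_mul, hdet, Pi.mulSingle_one]
  refine ⟨Pi.mulSingle i₀ U.det, hs, mem_specialOrthogonalGroup_iff.mpr
    ⟨mul_mem hU (diagonal_mem_orthogonalGroup hs), ?_⟩⟩
  rw [det_mul, det_diagonal, Fintype.prod_pi_mulSingle', hdet]

lemma exists_specialOrthogonal_mul_diagonal_mul_transpose [Nonempty m] {y : Matrix m m ℝ}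
    (hy : y.det ≠ 0) :
    ∃ U ∈ specialOrthogonalGroup m ℝ, ∃ V ∈ specialOrthogonalGroup m ℝ, ∃ d : m → ℝ,
      y = U * diagonal d * Vᵀ ∧ ∑ i, d i ^ 2 = ∑ i, ∑ j, y i j ^ 2 := by
  obtain ⟨U, hU, V, hV, d, rfl, hd⟩ := exists_orthogonal_mul_diagonal_mul_transpose hy
  obtain ⟨s, hs, hUs⟩ := exists_mul_diagonal_mem_specialOrthogonalGroup hU
  obtain ⟨t, ht, hVt⟩ := exists_mul_diagonal_mem_specialOrthogonalGroup hV
  -- the sign flips `s`, `t` are absorbed into the diagonal factor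
  have hs' (i : m) : s i * s i = 1 := congrFun hs i
  have ht' (i : m) : t i * t i = 1 := congrFun ht i
  refine ⟨U * diagonal s, hUs, V * diagonal t, hVt, s * d * t, ?_, ?_⟩
  · calc U * diagonal d * Vᵀ = U * (diagonal s * diagonal (s * d * t) * diagonal t) * Vᵀ := by
          rw [diagonal_mul_diagonal', diagonal_mul_diagonal']
          congr 3
          ext i
          simp only [Pi.mul_apply]
          linear_combination (-d i) * hs' i + (-d i * s i * s i) * ht' i
      _ = U * diagonal s * diagonal (s * d * t) * (V * diagonal t)ᵀ := by
          rw [transpose_mul, diagonal_transpose]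
          simp only [Matrix.mul_assoc]
  · rw [← hd]
    refine Finset.sum_congr rfl fun i _ => ?_
    simp only [Pi.mul_apply]
    linear_combination (d i ^ 2 * t i ^ 2) * hs' i + d i ^ 2 * ht' i

end Orthogonal

section SpecialOrthogonal

variable {m : Type*} [Fintype m] [DecidableEq m]

lemma diagonal_mem_specialOrthogonalGroup {s : m → ℝ} (hs : s ∈ evenSigns m) :
    diagonal s ∈ specialOrthogonalGroup m ℝ := by
  refine mem_specialOrthogonalGroup_iff.mpr ⟨diagonal_mem_orthogonalGroup ?_, ?_⟩
  · ext i
    rcases hs.1 i with h | h <;> simp [h]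
  · rw [det_diagonal, hs.2]

lemma transpose_mem_specialOrthogonalGroup {V : Matrix m m ℝ}
    (hV : V ∈ specialOrthogonalGroup m ℝ) : Vᵀ ∈ specialOrthogonalGroup m ℝ := by
  rw [← star_eq_transpose]
  exact (star (⟨V, hV⟩ : specialOrthogonalGroup m ℝ)).2

lemma mul_diagonal_mul_transpose_mem_convexHull {U V : Matrix m m ℝ}
    (hU : U ∈ specialOrthogonalGroup m ℝ) (hV : V ∈ specialOrthogonalGroup m ℝ) {d : m → ℝ}
    (hd : d ∈ convexHull ℝ (evenSigns m)) :
    U * diagonal d * Vᵀ ∈ convexHull ℝ (specialOrthogonalGroup m ℝ : Set (Matrix m m ℝ)) := by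
  let f : (m → ℝ) →ₗ[ℝ] Matrix m m ℝ :=
    LinearMap.mulRight ℝ Vᵀ ∘ₗ LinearMap.mulLeft ℝ U ∘ₗ diagonalLinearMap m ℝ ℝ
  have hf : f '' evenSigns m ⊆ specialOrthogonalGroup m ℝ := by
    rintro _ ⟨s, hs, rfl⟩
    exact mul_mem (mul_mem hU (diagonal_mem_specialOrthogonalGroup hs))
      (transpose_mem_specialOrthogonalGroup hV)
  exact convexHull_mono hf (f.image_convexHull _ ▸ ⟨d, hd, rfl⟩)

lemma mem_convexHull_specialOrthogonalGroup_of_det_ne_zero (hm : 2 < Fintype.card m)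
    {y : Matrix m m ℝ} (hy : y.det ≠ 0) (h : ∑ i, ∑ j, y i j ^ 2 ≤ 1 / 3) :
    y ∈ convexHull ℝ (specialOrthogonalGroup m ℝ : Set (Matrix m m ℝ)) := by
  have : Nonempty m := Fintype.card_pos_iff.mp (by omega)
  obtain ⟨U, hU, V, hV, d, rfl, hd⟩ := exists_specialOrthogonal_mul_diagonal_mul_transpose hy
  exact mul_diagonal_mul_transpose_mem_convexHull hU hV
    (mem_convexHull_evenSigns_of_sum_sq_le hm (hd ▸ h))

lemma eventually_det_add_smul_one_ne_zero (x : Matrix m m ℝ) :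
    ∀ᶠ ε in 𝓝[≠] (0 : ℝ), (x + ε • 1).det ≠ 0 := by
  refine nhdsNE_le_cofinite 0 ((-x).finite_spectrum.subset fun ε hε => ?_).compl_mem_cofinite
  replace hε : (x + ε • 1).det = 0 := hε
  rw [spectrum.mem_iff, Algebra.algebraMap_eq_smul_one, sub_neg_eq_add, add_comm,
    isUnit_iff_isUnit_det, isUnit_iff_ne_zero, not_not]
  exact hε

lemma mem_convexHull_specialOrthogonalGroup_of_sum_sq_lt (hm : 2 < Fintype.card m)
    {x : Matrix m m ℝ} (h : ∑ i, ∑ j, x i j ^ 2 < 1 / 3) :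
    x ∈ convexHull ℝ (specialOrthogonalGroup m ℝ : Set (Matrix m m ℝ)) := by
  have hc : Continuous fun ε : ℝ => ∑ i, ∑ j, (x + ε • 1) i j ^ 2 := by
    simp only [Matrix.add_apply, Matrix.smul_apply, smul_eq_mul]
    fun_prop
  have h_small : ∀ᶠ ε in 𝓝 (0 : ℝ),
      ∑ i, ∑ j, (x + ε • 1) i j ^ 2 ≤ 1 / 3 ∧ ∑ i, ∑ j, (x + (-ε) • 1) i j ^ 2 ≤ 1 / 3 := by
    have h0 : ∑ i, ∑ j, (x + (0 : ℝ) • 1) i j ^ 2 < 1 / 3 := by simpa using h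
    filter_upwards [(hc.tendsto 0).eventually_lt_const h0,
      ((hc.comp continuous_neg).tendsto 0).eventually_lt_const (by simpa using h0)]
      with ε h₁ h₂ using ⟨h₁.le, by simpa using h₂.le⟩
  have h_det := (eventually_det_add_smul_one_ne_zero x).and
    (eventually_det_add_smul_one_ne_zero (-x))
  obtain ⟨ε, ⟨h₁, h₂⟩, h₃, h₄⟩ := (h_det.and (nhdsWithin_le_nhds h_small)).exists
  replace h₂ : (x + (-ε) • 1).det ≠ 0 := by
    rw [show x + (-ε) • (1 : Matrix m m ℝ) = -(-x + ε • 1) by module, det_neg]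
    exact mul_ne_zero (by simp) h₂
  have hx : x = (1 / 2 : ℝ) • (x + ε • 1) + (1 / 2 : ℝ) • (x + (-ε) • 1) := by module
  rw [hx]
  exact convex_convexHull ℝ _ (mem_convexHull_specialOrthogonalGroup_of_det_ne_zero hm h₁ h₃)
    (mem_convexHull_specialOrthogonalGroup_of_det_ne_zero hm h₂ h₄)
    (by norm_num) (by norm_num) (by norm_num)

end SpecialOrthogonal

section Frobenius

attribute [local instance] Matrix.frobeniusNormedAddCommGroup Matrix.frobeniusNormedSpace

lemma frobNorm_eq_norm {n : ℕ} (x : Matrix (Fin n) (Fin n) ℝ) : frobNorm x = ‖x‖ := by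
  simp [frobNorm, frobenius_norm_def, Real.sqrt_eq_rpow]

lemma frobNorm_le_sqrt_of_mem_convexHull_orthogonalGroup {n : ℕ} {x : Matrix (Fin n) (Fin n) ℝ}
    (hx : x ∈ convexHull ℝ (orthogonalGroup (Fin n) ℝ : Set (Matrix (Fin n) (Fin n) ℝ))) :
    frobNorm x ≤ √n := by
  have hsub : (orthogonalGroup (Fin n) ℝ : Set (Matrix (Fin n) (Fin n) ℝ)) ⊆
      Metric.closedBall 0 √n := by
    intro R hR
    have hRR : Rᵀ * R = 1 := (mem_orthogonalGroup_iff' _ _).mp hR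
    rw [mem_closedBall_zero_iff, ← frobNorm_eq_norm, frobNorm, sum_sq_eq_trace_transpose_mul, hRR,
      trace_one, Fintype.card_fin]
  rw [frobNorm_eq_norm, ← mem_closedBall_zero_iff]
  exact convexHull_min hsub (convex_closedBall 0 √n) hx

end Frobenius

lemma SOset_eq_specialOrthogonalGroup (n : ℕ) : SOset n = specialOrthogonalGroup (Fin n) ℝ := by
  ext x
  simp [SOset, mem_specialOrthogonalGroup_iff, mem_orthogonalGroup_iff']

/-- For `n > 2`, the convex hull of `SO(n)` contains the Frobenius ball of
radius `1/2` and is contained in the Frobenius ball of radius `√n`. -/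
theorem convexHull_SO_ball_sandwich (n : ℕ) (hn : 2 < n) :
    (∀ x : Matrix (Fin n) (Fin n) ℝ, frobNorm x ≤ 1 / 2 →
        x ∈ convexHull ℝ (SOset n)) ∧
      ∀ x ∈ convexHull ℝ (SOset n), frobNorm x ≤ Real.sqrt n := by
  rw [SOset_eq_specialOrthogonalGroup]
  refine ⟨fun x hx => ?_, fun x hx => ?_⟩
  · have h : ∑ i, ∑ j, x i j ^ 2 ≤ (1 / 2) ^ 2 :=
      (Real.sqrt_le_left (by norm_num)).mp hx
    exact mem_convexHull_specialOrthogonalGroup_of_sum_sq_lt (by simpa using hn) (by linarith)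
  · exact frobNorm_le_sqrt_of_mem_convexHull_orthogonalGroup
      (convexHull_mono (fun _ h => (mem_specialOrthogonalGroup_iff.mp h).1) hx)
end

section
/- Let Ξ(y,z) := diag(y) + U(z) + U(z)ᵀ for y ∈ ℝ^n, z ∈ ℝ^{n(n−1)/2}, with U(z) the strictly upper-triangular matrix built from z. With c := I_n/2, the set C := {(y,z) : c + Ξ(y,z) ⪰ 0 and y_i ≤ 1/2 for all i} (reparametrizing PSD matrices with diagonal entries in [0,1]) satisfies B(1/4) ⊆ C ⊆ B(n^{3/2}) for the norm ‖(y,z)‖ = ‖y‖ + ‖z‖. -/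
/-- Index type for the strictly-upper-triangular entries of an `n × n` matrix:
there are `n(n−1)/2` of them. -/
abbrev StrictUpperIdx (n : ℕ) := {p : Fin n × Fin n // p.1 < p.2}

/-- `U(z)`: the strictly upper-triangular matrix built coordinatewise from `z`. -/
noncomputable def Umat {n : ℕ} (z : EuclideanSpace ℝ (StrictUpperIdx n)) :
    Matrix (Fin n) (Fin n) ℝ :=
  fun i j => if h : i < j then z ⟨(i, j), h⟩ else 0

/-- `Ξ(y, z) = diag(y) + U(z) + U(z)ᵀ`. -/
noncomputable def XiMat {n : ℕ} (y : EuclideanSpace ℝ (Fin n))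
    (z : EuclideanSpace ℝ (StrictUpperIdx n)) : Matrix (Fin n) (Fin n) ℝ :=
  Matrix.diagonal (fun i : Fin n => y i) + Umat z + (Umat z).transpose

/-!
Both inclusions go through the Frobenius norm, for which `‖Ξ(y,z)‖_F² = ‖y‖² + 2‖z‖²`.
If `‖y‖ + ‖z‖ ≤ 1/4` then `‖Ξ‖_F ≤ 1/2`, and `|xᵀ Ξ x| ≤ ‖Ξ‖_F ‖x‖²` makes `I/2 + Ξ` positive
semidefinite. Conversely, if `M = I/2 + Ξ` is positive semidefinite and `y_i ≤ 1/2`, the diagonal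
of `M` lies in `[0, 1]`, so testing `M` on `e_i ± e_j` gives `|M_ij| ≤ 1`. Hence
`‖Ξ‖_F² ≤ n² - 3n/4` and `(‖y‖ + ‖z‖)² ≤ 2 ‖Ξ‖_F² ≤ n³`.
-/

open Matrix WithLp

attribute [local instance] Matrix.frobeniusNormedAddCommGroup

theorem Fintype.sum_dite_eq_sum_subtype {α M : Type*} [Fintype α] [AddCommMonoid M]
    (p : α → Prop) [DecidablePred p] (g : Subtype p → M) :
    ∑ a, (if h : p a then g ⟨a, h⟩ else 0) = ∑ x : Subtype p, g x := by
  rw [← Fintype.sum_subtype_add_sum_subtype p]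
  simp [Subtype.prop, fun x : {x // ¬ p x} => x.2]

namespace Matrix

variable {m n : Type*} [Fintype m] [Fintype n]

theorem frobenius_norm_sq_eq_sum {α : Type*} [NormedAddCommGroup α] (A : Matrix m n α) :
    ‖A‖ ^ 2 = ∑ i, ∑ j, ‖A i j‖ ^ 2 := by
  change ‖toLp 2 fun i => toLp 2 fun j => A i j‖ ^ 2 = _
  simp [PiLp.norm_sq_eq_of_L2]

theorem frobenius_norm_mulVec_le {α : Type*} [RCLike α] (A : Matrix m n α) (x : n → α) :
    ‖toLp 2 (A *ᵥ x)‖ ≤ ‖A‖ * ‖toLp 2 x‖ := by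
  simpa [← replicateCol_mulVec] using frobenius_norm_mul A (replicateCol Unit x)

theorem abs_dotProduct_mulVec_le_frobenius_norm_mul (A : Matrix n n ℝ) (x : n → ℝ) :
    |x ⬝ᵥ A *ᵥ x| ≤ ‖A‖ * ‖toLp 2 x‖ ^ 2 := by
  have hinner : x ⬝ᵥ A *ᵥ x = inner ℝ (toLp 2 x) (toLp 2 (A *ᵥ x)) := by
    simp [EuclideanSpace.inner_eq_star_dotProduct, dotProduct_comm]
  calc |x ⬝ᵥ A *ᵥ x| ≤ ‖toLp 2 x‖ * ‖toLp 2 (A *ᵥ x)‖ := hinner ▸ abs_real_inner_le_norm _ _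
    _ ≤ ‖toLp 2 x‖ * (‖A‖ * ‖toLp 2 x‖) := by gcongr; exact frobenius_norm_mulVec_le A x
    _ = ‖A‖ * ‖toLp 2 x‖ ^ 2 := by ring

variable [DecidableEq n]

theorem posSemidef_smul_one_add_of_frobenius_norm_le {A : Matrix n n ℝ} {c : ℝ}
    (hA : A.IsHermitian) (hc : ‖A‖ ≤ c) : (c • (1 : Matrix n n ℝ) + A).PosSemidef := by
  refine .of_dotProduct_mulVec_nonneg ((isHermitian_one.smul (.all c)).add hA) fun x => ?_
  have hxx : x ⬝ᵥ x = ‖toLp 2 x‖ ^ 2 := by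
    rw [EuclideanSpace.norm_sq_eq]; simp [dotProduct, sq]
  have hAx := neg_le_of_abs_le (abs_dotProduct_mulVec_le_frobenius_norm_mul A x)
  simp only [star_trivial, add_mulVec, smul_mulVec, one_mulVec, dotProduct_add, dotProduct_smul,
    hxx, smul_eq_mul]
  linarith [mul_le_mul_of_nonneg_right hc (sq_nonneg ‖toLp 2 x‖)]

theorem PosSemidef.two_mul_abs_apply_le {M : Matrix n n ℝ} (hM : M.PosSemidef) (i j : n) :
    2 * |M i j| ≤ M i i + M j j := by
  have hsymm : M j i = M i j := by simpa using hM.isHermitian.apply i j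
  have hplus := hM.dotProduct_mulVec_nonneg (Pi.single i 1 + Pi.single j 1)
  have hminus := hM.dotProduct_mulVec_nonneg (Pi.single i 1 - Pi.single j 1)
  simp only [star_trivial, mulVec_add, mulVec_sub, mulVec_single, MulOpposite.op_one, one_smul,
    dotProduct_add, dotProduct_sub, add_dotProduct, sub_dotProduct, single_dotProduct, col_apply,
    one_mul] at hplus hminus
  rcases abs_cases (M i j) with ⟨h, -⟩ | ⟨h, -⟩ <;> linarith

end Matrix

section Reparametrization

variable {n : ℕ} {y : EuclideanSpace ℝ (Fin n)} {z : EuclideanSpace ℝ (StrictUpperIdx n)}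

@[simp]
theorem Umat_apply_self (z : EuclideanSpace ℝ (StrictUpperIdx n)) (i : Fin n) :
    Umat z i i = 0 := by
  simp [Umat]

@[simp]
theorem XiMat_apply_self (y : EuclideanSpace ℝ (Fin n)) (z : EuclideanSpace ℝ (StrictUpperIdx n))
    (i : Fin n) : XiMat y z i i = y i := by
  simp [XiMat]

theorem frobenius_norm_Umat (z : EuclideanSpace ℝ (StrictUpperIdx n)) : ‖Umat z‖ = ‖z‖ := by
  have hsq : ‖Umat z‖ ^ 2 = ‖z‖ ^ 2 := by
    rw [frobenius_norm_sq_eq_sum, EuclideanSpace.norm_sq_eq,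
      ← Fintype.sum_dite_eq_sum_subtype, ← Fintype.sum_prod_type']
    simp [Umat, apply_dite]
  exact (sq_eq_sq₀ (norm_nonneg _) (norm_nonneg _)).mp hsq

theorem frobenius_norm_XiMat_sq (y : EuclideanSpace ℝ (Fin n))
    (z : EuclideanSpace ℝ (StrictUpperIdx n)) :
    ‖XiMat y z‖ ^ 2 = ‖y‖ ^ 2 + 2 * ‖z‖ ^ 2 := by
  have hsupp : ∀ i j, ‖XiMat y z i j‖ ^ 2 =
      ‖diagonal (fun i => y i) i j‖ ^ 2 + ‖Umat z i j‖ ^ 2 + ‖(Umat z)ᵀ i j‖ ^ 2 := by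
    intro i j
    rcases lt_trichotomy i j with h | rfl | h
    · simp [XiMat, Umat, h, h.ne, h.not_gt]
    · simp
    · simp [XiMat, Umat, h.ne', h.not_gt]
  simp_rw [frobenius_norm_sq_eq_sum (XiMat y z), hsupp, Finset.sum_add_distrib,
    ← frobenius_norm_sq_eq_sum, frobenius_norm_diagonal, frobenius_norm_transpose,
    frobenius_norm_Umat]
  simp only [toLp_ofLp]; ring

theorem isHermitian_XiMat : (XiMat y z).IsHermitian := by
  rw [IsHermitian, conjTranspose_eq_transpose_of_trivial]
  simp [XiMat, add_right_comm]

theorem posSemidef_half_one_add_XiMat (h : ‖y‖ + ‖z‖ ≤ 1 / 4) :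
    ((1 / 2 : ℝ) • (1 : Matrix (Fin n) (Fin n) ℝ) + XiMat y z).PosSemidef := by
  refine posSemidef_smul_one_add_of_frobenius_norm_le isHermitian_XiMat ?_
  have hXi := frobenius_norm_XiMat_sq y z
  refine le_of_pow_le_pow_left₀ two_ne_zero (by norm_num) ?_
  nlinarith [norm_nonneg y, norm_nonneg z]

theorem sq_XiMat_apply_le
    (hP : ((1 / 2 : ℝ) • (1 : Matrix (Fin n) (Fin n) ℝ) + XiMat y z).PosSemidef)
    (hy : ∀ i, y i ≤ 1 / 2) (i j : Fin n) :
    XiMat y z i j ^ 2 ≤ 1 - 3 / 4 * (1 : Matrix (Fin n) (Fin n) ℝ) i j := by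
  set M := (1 / 2 : ℝ) • (1 : Matrix (Fin n) (Fin n) ℝ) + XiMat y z
  have hdiag : ∀ k, M k k = 1 / 2 + y k := fun k => by simp [M]
  have hy_ge : ∀ k, -(1 / 2) ≤ y k := fun k => by linarith [hdiag k ▸ hP.diag_nonneg (i := k)]
  rcases eq_or_ne i j with rfl | hne
  · simp only [XiMat_apply_self, one_apply_eq]
    nlinarith [hy_ge i, hy i]
  · have hM : M i j = XiMat y z i j := by simp [M, one_apply_ne hne]
    have hoff := hP.two_mul_abs_apply_le i j
    rw [hdiag, hdiag, hM] at hoff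
    rw [one_apply_ne hne, mul_zero, sub_zero, sq_le_one_iff_abs_le_one]
    linarith [hy i, hy j]

theorem frobenius_norm_XiMat_sq_le
    (hP : ((1 / 2 : ℝ) • (1 : Matrix (Fin n) (Fin n) ℝ) + XiMat y z).PosSemidef)
    (hy : ∀ i, y i ≤ 1 / 2) : ‖XiMat y z‖ ^ 2 ≤ n ^ 2 - 3 / 4 * n := by
  calc ‖XiMat y z‖ ^ 2 = ∑ i, ∑ j, XiMat y z i j ^ 2 := by simp [frobenius_norm_sq_eq_sum]
    _ ≤ ∑ i, ∑ j, (1 - 3 / 4 * (1 : Matrix (Fin n) (Fin n) ℝ) i j) := by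
      gcongr with i _ j _
      exact sq_XiMat_apply_le hP hy i j
    _ = n ^ 2 - 3 / 4 * n := by
      simp only [one_apply, mul_ite, mul_one, mul_zero, Finset.sum_sub_distrib, Finset.sum_const,
        Finset.card_univ, Fintype.card_fin, nsmul_eq_mul, Finset.sum_ite_eq, Finset.mem_univ,
        ↓reduceIte]
      ring

theorem norm_add_norm_le_of_posSemidef
    (hP : ((1 / 2 : ℝ) • (1 : Matrix (Fin n) (Fin n) ℝ) + XiMat y z).PosSemidef)
    (hy : ∀ i, y i ≤ 1 / 2) : ‖y‖ + ‖z‖ ≤ n * √n := by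
  have hXi := frobenius_norm_XiMat_sq y z
  have hle := frobenius_norm_XiMat_sq_le hP hy
  have hn := Nat.cast_nonneg (α := ℝ) n
  refine le_of_pow_le_pow_left₀ two_ne_zero (by positivity) ?_
  rw [mul_pow, Real.sq_sqrt hn]
  nlinarith [sq_nonneg (‖y‖ - ‖z‖), mul_nonneg hn (sq_nonneg ((n : ℝ) - 1))]

end Reparametrization

theorem psd_bounded_diag_reparam_ball_sandwich_general (n : ℕ) :
    (∀ (y : EuclideanSpace ℝ (Fin n)) (z : EuclideanSpace ℝ (StrictUpperIdx n)),
        ‖y‖ + ‖z‖ ≤ 1 / 4 →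
          (((1 : ℝ) / 2) • (1 : Matrix (Fin n) (Fin n) ℝ) + XiMat y z).PosSemidef ∧
            ∀ i, y i ≤ 1 / 2) ∧
      ∀ (y : EuclideanSpace ℝ (Fin n)) (z : EuclideanSpace ℝ (StrictUpperIdx n)),
        (((1 : ℝ) / 2) • (1 : Matrix (Fin n) (Fin n) ℝ) + XiMat y z).PosSemidef →
          (∀ i, y i ≤ 1 / 2) → ‖y‖ + ‖z‖ ≤ (n : ℝ) * Real.sqrt n := by
  refine ⟨fun y z h => ⟨posSemidef_half_one_add_XiMat h, fun i => ?_⟩,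
    fun y z hP hy => norm_add_norm_le_of_posSemidef hP hy⟩
  calc y i ≤ ‖y i‖ := Real.le_norm_self _
    _ ≤ ‖y‖ := PiLp.norm_apply_le y i
    _ ≤ 1 / 2 := by linarith [norm_nonneg z]

/-- With `c = I_n/2`, the reparametrized set of PSD matrices with diagonal
entries in `[0,1]`, `C = {(y, z) : c + Ξ(y, z) ⪰ 0 and y_i ≤ 1/2 ∀i}`, satisfies
`B(1/4) ⊆ C ⊆ B(n^{3/2})` for the norm `‖(y, z)‖ = ‖y‖ + ‖z‖`. -/
theorem psd_bounded_diag_reparam_ball_sandwich (n : ℕ) (hn : 1 ≤ n) :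
    (∀ (y : EuclideanSpace ℝ (Fin n)) (z : EuclideanSpace ℝ (StrictUpperIdx n)),
        ‖y‖ + ‖z‖ ≤ 1 / 4 →
          (((1 : ℝ) / 2) • (1 : Matrix (Fin n) (Fin n) ℝ) + XiMat y z).PosSemidef ∧
            ∀ i, y i ≤ 1 / 2) ∧
      ∀ (y : EuclideanSpace ℝ (Fin n)) (z : EuclideanSpace ℝ (StrictUpperIdx n)),
        (((1 : ℝ) / 2) • (1 : Matrix (Fin n) (Fin n) ℝ) + XiMat y z).PosSemidef →
          (∀ i, y i ≤ 1 / 2) → ‖y‖ + ‖z‖ ≤ (n : ℝ) * Real.sqrt n :=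
  psd_bounded_diag_reparam_ball_sandwich_general n
end
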